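/- arXiv:0901.4638 — 2 statements merged into one kernel-verified Lean document; each statement's English description precedes it below -/
import Mathlib

section
/- (Equation satisfied by the divergence.) Suppose λ, μ are twice continuously differentiable on Ω with μ(x) ≥ δ₀ > 0 and λ(x) + 2μ(x) ≥ δ₀ > 0, and u : Ω → ℝⁿ is three times continuously differentiable and solves the Lamé system div(μ(∇u + (∇u)ᵗ)) + ∇(λ div u) = 0 in Ω. Then p := div u satisfies pointwise in Ω: (λ + 2μ) Δp + (∇λ − μ^{−1} λ ∇μ)·∇p − (μ^{−1} ∇μ·∇λ) div u − μ^{−1} ∇μ · ((∇u) + (∇u)ᵗ) ∇μ + div( (div u) ∇λ + (∇u + (∇u)ᵗ) ∇μ ) = 0. -/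
open Real Set

noncomputable section

/-- The `j`-th partial derivative `∂_j f` of a scalar function on `ℝⁿ`. -/
def pdir (n : ℕ) (j : Fin n) (f : EuclideanSpace ℝ (Fin n) → ℝ) :
    EuclideanSpace ℝ (Fin n) → ℝ :=
  fun x => fderiv ℝ f x (EuclideanSpace.single j 1)

/-!
Write `S = ∇u + (∇u)ᵗ`, `p = div u` and `G_j = Σ_k ∂_k(μ S_jk) + ∂_j(λ p)` for the Lamé operator.
The product rule splits `G_j = T_j + μ (div S)_j + λ ∂_j p` with `T = p ∇λ + S ∇μ`, and the
left-hand side of the equation is exactly `div G − μ⁻¹ ∇μ · G`: differentiating `G_j` produces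
`μ Σ_j ∂_j (div S)_j = 2 μ Δp` (symmetry of third derivatives of `u`), while the term
`∇μ · div S` cancels against `μ⁻¹ ∇μ · G`. Both `div G` and `G` vanish on the open set `Ω`.
-/

open Filter Topology

section PartialDerivative

variable {n : ℕ} {f g : EuclideanSpace ℝ (Fin n) → ℝ} {x : EuclideanSpace ℝ (Fin n)}
  {i j k : Fin n}

theorem pdir_congr (h : f =ᶠ[𝓝 x] g) : pdir n j f x = pdir n j g x := by
  simp only [pdir, h.fderiv_eq]

theorem pdir_eq_zero_of_eventuallyEq_zero (h : f =ᶠ[𝓝 x] 0) : pdir n j f x = 0 := by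
  rw [pdir_congr h]
  simp [pdir]

theorem pdir_add (hf : DifferentiableAt ℝ f x) (hg : DifferentiableAt ℝ g x) :
    pdir n j (fun y => f y + g y) x = pdir n j f x + pdir n j g x := by
  simp [pdir, fderiv_fun_add hf hg]

theorem pdir_mul (hf : DifferentiableAt ℝ f x) (hg : DifferentiableAt ℝ g x) :
    pdir n j (fun y => f y * g y) x = pdir n j f x * g x + f x * pdir n j g x := by
  simp [pdir, fderiv_fun_mul hf hg]
  ring

theorem pdir_sum {ι : Type*} {s : Finset ι} {F : ι → EuclideanSpace ℝ (Fin n) → ℝ}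
    (h : ∀ i ∈ s, DifferentiableAt ℝ (F i) x) :
    pdir n j (fun y => ∑ i ∈ s, F i y) x = ∑ i ∈ s, pdir n j (F i) x := by
  simp [pdir, fderiv_fun_sum h]

theorem ContDiffAt.pdir {N m : WithTop ℕ∞} (hf : ContDiffAt ℝ N f x) (hmN : m + 1 ≤ N) :
    ContDiffAt ℝ m (pdir n j f) x :=
  (hf.fderiv_right hmN).clm_apply contDiffAt_const

theorem ContDiffAt.differentiableAt_pdir {N : WithTop ℕ∞} (hf : ContDiffAt ℝ N f x)
    (hN : 2 ≤ N) : DifferentiableAt ℝ (_root_.pdir n j f) x :=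
  (hf.pdir (m := 1) (by rwa [one_add_one_eq_two])).differentiableAt one_ne_zero

theorem pdir_comm (hf : ContDiffAt ℝ 2 f x) :
    pdir n j (pdir n k f) x = pdir n k (pdir n j f) x := by
  have hd : DifferentiableAt ℝ (fderiv ℝ f) x :=
    (hf.fderiv_right (m := 1) le_rfl).differentiableAt one_ne_zero
  have hsecond : ∀ a b : Fin n, pdir n a (pdir n b f) x =
      fderiv ℝ (fderiv ℝ f) x (EuclideanSpace.single a 1) (EuclideanSpace.single b 1) := by
    intro a b
    unfold pdir
    rw [fderiv_clm_apply hd (differentiableAt_const _)]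
    simp
  rw [hsecond, hsecond, hf.isSymmSndFDerivAt (by simp)]

theorem pdir_pdir_pdir_comm_inner (hf : ContDiffAt ℝ 3 f x) :
    pdir n i (pdir n j (pdir n k f)) x = pdir n i (pdir n k (pdir n j f)) x :=
  pdir_congr <| (hf.eventually (by simp)).mono fun _ hy => pdir_comm (hy.of_le (by norm_num))

theorem pdir_pdir_pdir_comm_outer (hf : ContDiffAt ℝ 3 f x) :
    pdir n i (pdir n j (pdir n k f)) x = pdir n j (pdir n i (pdir n k f)) x :=
  pdir_comm (hf.pdir (by norm_num))

end PartialDerivative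

/-- The variables stand for the values at `x` of `λ`, `p`, `∂_jλ`, `∂_jμ`, `∂_jp`, `∂_j∂_jp`,
`(S∇μ)_j`, `∂_jT_j`, `(div S)_j` and `∂_j(div S)_j`. -/
theorem lame_algebra {ι : Type*} [Fintype ι] {M : ℝ} (hM : M ≠ 0) (L p : ℝ)
    (a b P P' Q T' D D' : ι → ℝ) (hD : ∑ i, D' i = 2 * ∑ i, P' i) :
    (L + 2 * M) * ∑ i, P' i + ∑ i, (a i - M⁻¹ * L * b i) * P i - (M⁻¹ * ∑ i, b i * a i) * p -
        M⁻¹ * ∑ i, b i * Q i + ∑ i, T' i =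
      ∑ i, (T' i + (b i * D i + M * D' i) + (a i * P i + L * P' i)) -
        M⁻¹ * ∑ i, b i * (p * a i + Q i + M * D i + L * P i) := by
  rw [← sub_eq_zero]
  calc _ = ∑ i, M * (2 * P' i - D' i) := by
        simp only [Finset.mul_sum, Finset.sum_mul, ← Finset.sum_add_distrib,
          ← Finset.sum_sub_distrib]
        refine Finset.sum_congr rfl fun i _ => ?_
        field_simp
        ring
    _ = 0 := by rw [← Finset.mul_sum, Finset.sum_sub_distrib, ← Finset.mul_sum, hD, sub_self,
      mul_zero]

section Lame

variable {n : ℕ} (lam mu : EuclideanSpace ℝ (Fin n) → ℝ)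
  (u : Fin n → EuclideanSpace ℝ (Fin n) → ℝ)

def divergence : EuclideanSpace ℝ (Fin n) → ℝ :=
  fun y => ∑ i, pdir n i (u i) y

def symmGrad (j k : Fin n) : EuclideanSpace ℝ (Fin n) → ℝ :=
  fun y => pdir n k (u j) y + pdir n j (u k) y

def lameOperator (j : Fin n) : EuclideanSpace ℝ (Fin n) → ℝ :=
  fun y => (∑ k, pdir n k (fun z => mu z * symmGrad u j k z) y) +
    pdir n j (fun z => lam z * divergence u z) y

def coeffGradTerm (j : Fin n) : EuclideanSpace ℝ (Fin n) → ℝ :=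
  fun y => divergence u y * pdir n j lam y + ∑ k, symmGrad u j k y * pdir n k mu y

def divSymmGrad (j : Fin n) : EuclideanSpace ℝ (Fin n) → ℝ :=
  fun y => ∑ k, pdir n k (symmGrad u j k) y

variable {lam mu u} {x : EuclideanSpace ℝ (Fin n)} {N m : WithTop ℕ∞}

theorem contDiffAt_divergence (hu : ∀ i, ContDiffAt ℝ N (u i) x) (hmN : m + 1 ≤ N) :
    ContDiffAt ℝ m (divergence u) x :=
  ContDiffAt.sum fun i _ => (hu i).pdir hmN

theorem contDiffAt_symmGrad (hu : ∀ i, ContDiffAt ℝ N (u i) x) (hmN : m + 1 ≤ N)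
    (j k : Fin n) : ContDiffAt ℝ m (symmGrad u j k) x :=
  ((hu j).pdir hmN).add ((hu k).pdir hmN)

theorem lameOperator_eq (hlam : DifferentiableAt ℝ lam x) (hmu : DifferentiableAt ℝ mu x)
    (hu : ∀ i, ContDiffAt ℝ 2 (u i) x) (j : Fin n) :
    lameOperator lam mu u j x =
      coeffGradTerm lam mu u j x + mu x * divSymmGrad u j x +
        lam x * pdir n j (divergence u) x := by
  have hS k := (contDiffAt_symmGrad hu (m := 1) (by norm_num) j k).differentiableAt one_ne_zero
  have hdiv := (contDiffAt_divergence hu (m := 1) (by norm_num)).differentiableAt one_ne_zero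
  simp only [lameOperator, coeffGradTerm, divSymmGrad, pdir_mul hmu (hS _), pdir_mul hlam hdiv,
    Finset.sum_add_distrib, Finset.mul_sum]
  simp only [mul_comm (pdir n _ mu x)]
  ring

theorem pdir_lameOperator (hlam : ContDiffAt ℝ 2 lam x) (hmu : ContDiffAt ℝ 2 mu x)
    (hu : ∀ i, ContDiffAt ℝ 3 (u i) x) (j : Fin n) :
    pdir n j (lameOperator lam mu u j) x =
      pdir n j (coeffGradTerm lam mu u j) x +
        (pdir n j mu x * divSymmGrad u j x + mu x * pdir n j (divSymmGrad u j) x) +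
        (pdir n j lam x * pdir n j (divergence u) x +
          lam x * pdir n j (pdir n j (divergence u)) x) := by
  have hexpand : lameOperator lam mu u j =ᶠ[𝓝 x] fun y =>
      coeffGradTerm lam mu u j y + mu y * divSymmGrad u j y +
        lam y * pdir n j (divergence u) y := by
    filter_upwards [hlam.eventually (by simp), hmu.eventually (by simp),
      eventually_all.2 fun i => (hu i).eventually (by simp)] with y hlamy hmuy huy
    exact lameOperator_eq (hlamy.differentiableAt two_ne_zero)
      (hmuy.differentiableAt two_ne_zero) (fun i => (huy i).of_le (by norm_num)) j
  have hcoeff : DifferentiableAt ℝ (coeffGradTerm lam mu u j) x :=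
    (((contDiffAt_divergence hu (m := 1) (by norm_num)).mul (hlam.pdir le_rfl)).add
      (ContDiffAt.sum fun k _ => (contDiffAt_symmGrad hu (m := 1) (by norm_num) j k).mul
        (hmu.pdir le_rfl))).differentiableAt one_ne_zero
  have hdivS : DifferentiableAt ℝ (divSymmGrad u j) x :=
    DifferentiableAt.fun_sum fun k _ =>
      (contDiffAt_symmGrad hu (m := 2) (by norm_num) j k).differentiableAt_pdir le_rfl
  have hdiv : DifferentiableAt ℝ (pdir n j (divergence u)) x :=
    (contDiffAt_divergence hu (m := 2) (by norm_num)).differentiableAt_pdir le_rfl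
  have hlam' := hlam.differentiableAt two_ne_zero
  have hmu' := hmu.differentiableAt two_ne_zero
  rw [pdir_congr hexpand, pdir_add (hcoeff.fun_add (hmu'.fun_mul hdivS)) (hlam'.fun_mul hdiv),
    pdir_add hcoeff (hmu'.fun_mul hdivS), pdir_mul hmu' hdivS, pdir_mul hlam' hdiv]

theorem pdir_pdir_divergence (hu : ∀ i, ContDiffAt ℝ 3 (u i) x) (l : Fin n) :
    pdir n l (pdir n l (divergence u)) x = ∑ i, pdir n l (pdir n l (pdir n i (u i))) x := by
  have hsum : pdir n l (divergence u) =ᶠ[𝓝 x] fun y => ∑ i, pdir n l (pdir n i (u i)) y := by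
    filter_upwards [eventually_all.2 fun i => (hu i).eventually (by simp)] with y huy
    exact pdir_sum fun i _ => (huy i).differentiableAt_pdir (by norm_num)
  rw [pdir_congr hsum,
    pdir_sum fun i _ => ((hu i).pdir (m := 2) (by norm_num)).differentiableAt_pdir le_rfl]

theorem pdir_pdir_symmGrad (hu : ∀ i, ContDiffAt ℝ 3 (u i) x) (j k : Fin n) :
    pdir n j (pdir n k (symmGrad u j k)) x =
      pdir n k (pdir n k (pdir n j (u j))) x + pdir n j (pdir n j (pdir n k (u k))) x := by
  have hsum : pdir n k (symmGrad u j k) =ᶠ[𝓝 x] fun y =>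
      pdir n k (pdir n k (u j)) y + pdir n k (pdir n j (u k)) y := by
    filter_upwards [eventually_all.2 fun i => (hu i).eventually (by simp)] with y huy
    exact pdir_add ((huy j).differentiableAt_pdir (by norm_num))
      ((huy k).differentiableAt_pdir (by norm_num))
  rw [pdir_congr hsum,
    pdir_add (((hu j).pdir (m := 2) (by norm_num)).differentiableAt_pdir le_rfl)
      (((hu k).pdir (m := 2) (by norm_num)).differentiableAt_pdir le_rfl),
    pdir_pdir_pdir_comm_outer (hu j), pdir_pdir_pdir_comm_inner (hu j),
    pdir_pdir_pdir_comm_inner (hu k)]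

theorem sum_pdir_divSymmGrad (hu : ∀ i, ContDiffAt ℝ 3 (u i) x) :
    ∑ j, pdir n j (divSymmGrad u j) x = 2 * ∑ j, pdir n j (pdir n j (divergence u)) x := by
  have hdivS j : pdir n j (divSymmGrad u j) x = ∑ k, pdir n j (pdir n k (symmGrad u j k)) x :=
    pdir_sum fun k _ => (contDiffAt_symmGrad hu (m := 2) (by norm_num) j k).differentiableAt_pdir
      le_rfl
  simp only [hdivS, pdir_pdir_symmGrad hu, Finset.sum_add_distrib, pdir_pdir_divergence hu]
  rw [Finset.sum_comm]
  ring

theorem lameOperator_divergence_identity (hlam : ContDiffAt ℝ 2 lam x)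
    (hmu : ContDiffAt ℝ 2 mu x) (hu : ∀ i, ContDiffAt ℝ 3 (u i) x) (hmu0 : mu x ≠ 0) :
    (lam x + 2 * mu x) * (∑ j, pdir n j (pdir n j (divergence u)) x) +
        (∑ j, (pdir n j lam x - (mu x)⁻¹ * lam x * pdir n j mu x) *
          pdir n j (divergence u) x) -
        ((mu x)⁻¹ * ∑ j, pdir n j mu x * pdir n j lam x) * divergence u x -
        (mu x)⁻¹ * (∑ j, pdir n j mu x * ∑ k, symmGrad u j k x * pdir n k mu x) +
        ∑ j, pdir n j (coeffGradTerm lam mu u j) x =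
      ∑ j, pdir n j (lameOperator lam mu u j) x -
        (mu x)⁻¹ * ∑ j, pdir n j mu x * lameOperator lam mu u j x := by
  simp only [pdir_lameOperator hlam hmu hu, lameOperator_eq (hlam.differentiableAt two_ne_zero)
    (hmu.differentiableAt two_ne_zero) (fun i => (hu i).of_le (by norm_num))]
  exact lame_algebra hmu0 (lam x) (divergence u x) (fun j => pdir n j lam x)
    (fun j => pdir n j mu x) (fun j => pdir n j (divergence u) x)
    (fun j => pdir n j (pdir n j (divergence u)) x)
    (fun j => ∑ k, symmGrad u j k x * pdir n k mu x)
    (fun j => pdir n j (coeffGradTerm lam mu u j) x) (fun j => divSymmGrad u j x)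
    (fun j => pdir n j (divSymmGrad u j) x) (sum_pdir_divSymmGrad hu)

end Lame

theorem divergence_equation_general (n : ℕ)
    (Ω : Set (EuclideanSpace ℝ (Fin n))) (hΩ : IsOpen Ω) (δ₀ : ℝ) (hδ₀ : 0 < δ₀)
    (lam mu : EuclideanSpace ℝ (Fin n) → ℝ)
    (hlam : ContDiffOn ℝ 2 lam Ω) (hmu : ContDiffOn ℝ 2 mu Ω)
    (hmupos : ∀ x ∈ Ω, δ₀ ≤ mu x)
    (u : Fin n → EuclideanSpace ℝ (Fin n) → ℝ)
    (hu : ∀ j, ContDiffOn ℝ 3 (u j) Ω)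
    (heq : ∀ j : Fin n, ∀ x ∈ Ω,
      (∑ k, pdir n k (fun y => mu y * (pdir n k (u j) y + pdir n j (u k) y)) x) +
        pdir n j (fun y => lam y * ∑ i, pdir n i (u i) y) x = 0) :
    ∀ x ∈ Ω,
      (lam x + 2 * mu x) *
          (∑ j, pdir n j (pdir n j (fun y => ∑ i, pdir n i (u i) y)) x) +
        (∑ j, (pdir n j lam x - (mu x)⁻¹ * lam x * pdir n j mu x) *
          pdir n j (fun y => ∑ i, pdir n i (u i) y) x) -
        ((mu x)⁻¹ * ∑ j, pdir n j mu x * pdir n j lam x) * (∑ i, pdir n i (u i) x) -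
        (mu x)⁻¹ *
          (∑ j, pdir n j mu x *
            ∑ k, (pdir n k (u j) x + pdir n j (u k) x) * pdir n k mu x) +
        (∑ j, pdir n j (fun y =>
          (∑ i, pdir n i (u i) y) * pdir n j lam y +
            ∑ k, (pdir n k (u j) y + pdir n j (u k) y) * pdir n k mu y) x) = 0 := by
  intro x hx
  have hΩx : Ω ∈ 𝓝 x := hΩ.mem_nhds hx
  have hlame j : lameOperator lam mu u j =ᶠ[𝓝 x] 0 :=
    eventually_of_mem hΩx fun y hy => heq j y hy
  refine (lameOperator_divergence_identity (hlam.contDiffAt hΩx) (hmu.contDiffAt hΩx)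
    (fun i => (hu i).contDiffAt hΩx) (hδ₀.trans_le (hmupos x hx)).ne').trans ?_
  simp [pdir_eq_zero_of_eventuallyEq_zero (hlame _), (hlame _).eq_of_nhds]

/-- **Equation for the divergence (2.4)/(1.4).** If `λ, μ ∈ C²(Ω)` with
`μ ≥ δ₀ > 0`, `λ + 2μ ≥ δ₀ > 0`, and `u ∈ C³(Ω, ℝⁿ)` solves the Lamé system
`div(μ(∇u + (∇u)ᵗ)) + ∇(λ div u) = 0` in `Ω`, then `p := div u` satisfies
`(λ+2μ)Δp + (∇λ − μ⁻¹λ∇μ)·∇p − (μ⁻¹∇μ·∇λ) div u − μ⁻¹∇μ·((∇u)+(∇u)ᵗ)∇μ`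
`+ div((div u)∇λ + (∇u+(∇u)ᵗ)∇μ) = 0` pointwise in `Ω`. -/
theorem divergence_equation (n : ℕ) (hn : 2 ≤ n)
    (Ω : Set (EuclideanSpace ℝ (Fin n))) (hΩ : IsOpen Ω) (δ₀ : ℝ) (hδ₀ : 0 < δ₀)
    (lam mu : EuclideanSpace ℝ (Fin n) → ℝ)
    (hlam : ContDiffOn ℝ 2 lam Ω) (hmu : ContDiffOn ℝ 2 mu Ω)
    (hmupos : ∀ x ∈ Ω, δ₀ ≤ mu x) (hell : ∀ x ∈ Ω, δ₀ ≤ lam x + 2 * mu x)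
    (u : Fin n → EuclideanSpace ℝ (Fin n) → ℝ)
    (hu : ∀ j, ContDiffOn ℝ 3 (u j) Ω)
    (heq : ∀ j : Fin n, ∀ x ∈ Ω,
      (∑ k, pdir n k (fun y => mu y * (pdir n k (u j) y + pdir n j (u k) y)) x) +
        pdir n j (fun y => lam y * ∑ i, pdir n i (u i) y) x = 0) :
    ∀ x ∈ Ω,
      (lam x + 2 * mu x) *
          (∑ j, pdir n j (pdir n j (fun y => ∑ i, pdir n i (u i) y)) x) +
        (∑ j, (pdir n j lam x - (mu x)⁻¹ * lam x * pdir n j mu x) *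
          pdir n j (fun y => ∑ i, pdir n i (u i) y) x) -
        ((mu x)⁻¹ * ∑ j, pdir n j mu x * pdir n j lam x) * (∑ i, pdir n i (u i) x) -
        (mu x)⁻¹ *
          (∑ j, pdir n j mu x *
            ∑ k, (pdir n k (u j) x + pdir n j (u k) x) * pdir n k mu x) +
        (∑ j, pdir n j (fun y =>
          (∑ i, pdir n i (u i) y) * pdir n j lam y +
            ∑ k, (pdir n k (u j) y + pdir n j (u k) y) * pdir n k mu y) x) = 0 :=
  divergence_equation_general n Ω hΩ δ₀ hδ₀ lam mu hlam hmu hmupos u hu heq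
end
end

section
/- (Abstract vanishing-order lemma.) Let 0 < R₂ < R₃, let B > 0 and C ≥ 1 be constants, and let f : (0, R₃] → [0, ∞) be nondecreasing with f(R₂) > 0. Suppose that for every R₁ ∈ (0, R₂) one has f(R₂) ≤ C f(R₁)^{τ} f(R₃)^{1−τ} with τ = τ(R₁) = B/(log(e R₂/R₁) + B). Then there exist constants K > 0 and m > 0, with K = f(R₃) and m ≤ C̃ (1 + log(C f(R₃)/f(R₂))) for a constant C̃ depending only on B and R₂, such that f(R) ≥ K R^m for all sufficiently small R > 0. -/
open Real Set

/-!
Taking logarithms, the three-ball inequality at radius `R` says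
`f R ≥ f R₃ · A ^ (-1/τ(R))` with `A = C f(R₃)/f(R₂) ≥ 1`, and
`1/τ(R) = (log (e R₂ / R) + B) / B ≤ (2 / B) log (1 / R)` once `R` is small.
Hence `f R ≥ f R₃ · R ^ ((2 / B) log A) ≥ f R₃ · R ^ ((2 / B) (1 + log A))`.
-/

lemma mul_rpow_inv_le_of_le_mul_rpow_mul_rpow {a C c x τ : ℝ} (ha : 0 ≤ a) (hC : 0 < C)
    (hc : 0 < c) (hx : 0 ≤ x) (hτ : 0 < τ) (h : a ≤ C * x ^ τ * c ^ (1 - τ)) :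
    c * (a / (C * c)) ^ τ⁻¹ ≤ x := by
  have hcτ : 0 < c ^ τ := rpow_pos_of_pos hc τ
  have hratio : a / (C * c) ≤ (x / c) ^ τ := by
    rw [div_rpow hx hc.le, div_le_div_iff₀ (by positivity) hcτ]
    calc a * c ^ τ ≤ C * x ^ τ * c ^ (1 - τ) * c ^ τ := by gcongr
      _ = x ^ τ * (C * c) := by
        rw [mul_assoc, ← rpow_add hc, sub_add_cancel, rpow_one]; ring
  calc c * (a / (C * c)) ^ τ⁻¹ ≤ c * ((x / c) ^ τ) ^ τ⁻¹ := by gcongr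
    _ = x := by rw [rpow_rpow_inv (by positivity) hτ.ne', mul_div_cancel₀ _ hc.ne']

lemma rpow_mul_one_add_log_le_inv_rpow {A R s t : ℝ} (hA : 1 ≤ A) (hR : 0 < R) (ht : 0 < t)
    (hs : 0 ≤ s) (hst : s ≤ t * log R⁻¹) :
    R ^ (t * (1 + log A)) ≤ A⁻¹ ^ s := by
  have hlogA : 0 ≤ log A := log_nonneg hA
  have hlogR : 0 ≤ log R⁻¹ := nonneg_of_mul_nonneg_right (hs.trans hst) ht
  rw [log_inv] at hst hlogR
  rw [rpow_def_of_pos hR, rpow_def_of_pos (inv_pos.2 (zero_lt_one.trans_le hA)), log_inv]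
  rw [exp_le_exp]
  nlinarith [mul_le_mul_of_nonneg_right hst hlogA]

lemma log_exp_one_mul_div_add_le_two_mul_log_inv {B R₂ R : ℝ} (hR₂ : 0 < R₂) (hR : 0 < R)
    (hRε : R ≤ exp (-(1 + B)) / R₂) :
    log (exp 1 * R₂ / R) + B ≤ 2 * log R⁻¹ := by
  have hlogR : log R ≤ -(1 + B) - log R₂ := by
    rw [← log_exp (-(1 + B)), ← log_div (exp_pos _).ne' hR₂.ne']
    exact log_le_log hR hRε
  rw [log_div (by positivity) hR.ne', log_mul (exp_pos 1).ne' hR₂.ne', log_exp, log_inv]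
  linarith

/-- **Abstract vanishing-order lemma.** Let `0 < R₂ < R₃`, `B > 0`. There is a
constant `C̃ > 0` depending only on `B` and `R₂` such that: for every `C ≥ 1` and
every nondecreasing `f : (0,R₃] → [0,∞)` with `f(R₂) > 0` satisfying the optimal
three-ball inequality `f(R₂) ≤ C f(R₁)^τ f(R₃)^{1-τ}`,
`τ = B/(log(eR₂/R₁) + B)`, for all `R₁ ∈ (0,R₂)`, there are `K > 0` and `m > 0`
with `K = f(R₃)`, `m ≤ C̃ (1 + log(C f(R₃)/f(R₂)))`, and `f(R) ≥ K R^m` for all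
sufficiently small `R > 0`. -/
theorem abstract_vanishing_order (R₂ R₃ B : ℝ) (hR₂ : 0 < R₂) (hR₂₃ : R₂ < R₃)
    (hB : 0 < B) :
    ∃ Ct : ℝ, 0 < Ct ∧
      ∀ (C : ℝ) (f : ℝ → ℝ), 1 ≤ C →
        (∀ x ∈ Set.Ioc (0 : ℝ) R₃, 0 ≤ f x) →
        MonotoneOn f (Set.Ioc (0 : ℝ) R₃) →
        0 < f R₂ →
        (∀ R₁ : ℝ, 0 < R₁ → R₁ < R₂ →
          f R₂ ≤ C * f R₁ ^ (B / (Real.log (Real.exp 1 * R₂ / R₁) + B)) *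
            f R₃ ^ (1 - B / (Real.log (Real.exp 1 * R₂ / R₁) + B))) →
        ∃ K m : ℝ, 0 < K ∧ 0 < m ∧ K = f R₃ ∧
          m ≤ Ct * (1 + Real.log (C * f R₃ / f R₂)) ∧
          ∃ ε : ℝ, 0 < ε ∧ ∀ R : ℝ, 0 < R → R < ε → K * R ^ m ≤ f R := by
  refine ⟨2 / B, by positivity, fun C f hC hf0 hmono hfR₂ hineq => ?_⟩
  have hf₂₃ : f R₂ ≤ f R₃ := hmono ⟨hR₂, hR₂₃.le⟩ ⟨hR₂.trans hR₂₃, le_rfl⟩ hR₂₃.le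
  have hfR₃ : 0 < f R₃ := hfR₂.trans_le hf₂₃
  have hA : 1 ≤ C * f R₃ / f R₂ := (one_le_div hfR₂).2 (by nlinarith)
  refine ⟨f R₃, 2 / B * (1 + log (C * f R₃ / f R₂)), hfR₃, by positivity [log_nonneg hA],
    rfl, le_rfl, min R₂ (exp (-(1 + B)) / R₂), by positivity, fun R hR hRε => ?_⟩
  have hRR₂ : R < R₂ := hRε.trans_le (min_le_left _ _)
  have hT : 0 < log (exp 1 * R₂ / R) + B := by
    have : 1 ≤ exp 1 * R₂ / R := (one_le_div hR).2 (by nlinarith [add_one_le_exp 1])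
    linarith [log_nonneg this]
  calc f R₃ * R ^ (2 / B * (1 + log (C * f R₃ / f R₂)))
      ≤ f R₃ * (C * f R₃ / f R₂)⁻¹ ^ ((log (exp 1 * R₂ / R) + B) / B) := by
        gcongr
        refine rpow_mul_one_add_log_le_inv_rpow hA hR (by positivity) (by positivity) ?_
        rw [div_mul_eq_mul_div, div_le_div_iff_of_pos_right hB]
        exact log_exp_one_mul_div_add_le_two_mul_log_inv hR₂ hR (hRε.le.trans (min_le_right _ _))
    _ = f R₃ * (f R₂ / (C * f R₃)) ^ (B / (log (exp 1 * R₂ / R) + B))⁻¹ := by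
        rw [inv_div, inv_div]
    _ ≤ f R := mul_rpow_inv_le_of_le_mul_rpow_mul_rpow hfR₂.le (by positivity) hfR₃
        (hf0 R ⟨hR, (hRR₂.trans hR₂₃).le⟩) (by positivity) (hineq R hR hRR₂)
end
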